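/- arXiv:1311.3887 — 3 statements merged into one kernel-verified Lean document; each statement's English description precedes it below -/
import Mathlib

section
/- Let A and B be positive semidefinite complex matrices of the same finite size, and let p, q > 1 be real numbers with 1/p + 1/q = 1. Then tr(AB) ≤ (tr(A^p))^(1/p) · (tr(B^q))^(1/q). (All traces appearing here are nonnegative real numbers.) -/
open scoped Kronecker ComplexOrder
open Matrix

/-- Real power of a matrix via the functional calculus on the eigenvalues,
with the convention `0 ^ t = 0` (powers taken on the support). -/
noncomputable def matRpow {n : Type*} [Fintype n] [DecidableEq n]
    (A : Matrix n n ℂ) (t : ℝ) : Matrix n n ℂ :=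
  if hA : A.IsHermitian then
    (hA.eigenvectorUnitary : Matrix n n ℂ) *
      Matrix.diagonal (fun i =>
        ((if hA.eigenvalues i = 0 then (0 : ℝ) else (hA.eigenvalues i) ^ t : ℝ) : ℂ)) *
      star (hA.eigenvectorUnitary : Matrix n n ℂ)
  else 0

/-- Matrix logarithm on the support. -/
noncomputable def matLog {n : Type*} [Fintype n] [DecidableEq n]
    (A : Matrix n n ℂ) : Matrix n n ℂ :=
  if hA : A.IsHermitian then
    (hA.eigenvectorUnitary : Matrix n n ℂ) *
      Matrix.diagonal (fun i => ((Real.log (hA.eigenvalues i) : ℝ) : ℂ)) *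
      star (hA.eigenvectorUnitary : Matrix n n ℂ)
  else 0

/-- Partial trace over the first tensor factor. -/
noncomputable def trFst {a b : Type*} [Fintype a] (M : Matrix (a × b) (a × b) ℂ) :
    Matrix b b ℂ :=
  Matrix.of fun j j' => ∑ i, M (i, j) (i, j')

/-- Partial trace over the second tensor factor. -/
noncomputable def trSnd {a b : Type*} [Fintype b] (M : Matrix (a × b) (a × b) ℂ) :
    Matrix a a ℂ :=
  Matrix.of fun i i' => ∑ j, M (i, j) (i', j)

/-- Partial trace over the third factor of a tripartite system. -/
noncomputable def trThird {a b c : Type*} [Fintype c]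
    (M : Matrix (a × b × c) (a × b × c) ℂ) : Matrix (a × b) (a × b) ℂ :=
  Matrix.of fun p p' => ∑ k, M (p.1, p.2, k) (p'.1, p'.2, k)

/-- Partial trace over the second factor of a tripartite system. -/
noncomputable def trSecond {a b c : Type*} [Fintype b]
    (M : Matrix (a × b × c) (a × b × c) ℂ) : Matrix (a × c) (a × c) ℂ :=
  Matrix.of fun p p' => ∑ j, M (p.1, j, p.2) (p'.1, j, p'.2)

/-- Partial trace over the first two factors of a tripartite system. -/
noncomputable def trFstSnd {a b c : Type*} [Fintype a] [Fintype b]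
    (M : Matrix (a × b × c) (a × b × c) ℂ) : Matrix c c ℂ :=
  Matrix.of fun k k' => ∑ i, ∑ j, M (i, j, k) (i, j, k')

/-- Partial trace over the first and third factors of a tripartite system. -/
noncomputable def trFstThird {a b c : Type*} [Fintype a] [Fintype c]
    (M : Matrix (a × b × c) (a × b × c) ℂ) : Matrix b b ℂ :=
  Matrix.of fun j j' => ∑ i, ∑ k, M (i, j, k) (i, j', k)

/-- Quantum Rényi relative entropy `D_α(ρ‖σ)`. -/
noncomputable def renyiDiv {n : Type*} [Fintype n] [DecidableEq n]
    (α : ℝ) (ρ σ : Matrix n n ℂ) : ℝ :=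
  (α - 1)⁻¹ * Real.log ((matRpow ρ α * matRpow σ (1 - α)).trace.re)

/-- Sandwiched quantum Rényi divergence `D̃_α(ρ‖σ)`. -/
noncomputable def sandwichedRenyiDiv {n : Type*} [Fintype n] [DecidableEq n]
    (α : ℝ) (ρ σ : Matrix n n ℂ) : ℝ :=
  (α - 1)⁻¹ * Real.log
    ((matRpow (matRpow σ ((1 - α) / (2 * α)) * ρ * matRpow σ ((1 - α) / (2 * α))) α).trace.re)

/-- Quantum relative entropy `D(ρ‖σ)`. -/
noncomputable def relEntropy {n : Type*} [Fintype n] [DecidableEq n]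
    (ρ σ : Matrix n n ℂ) : ℝ :=
  (ρ * (matLog ρ - matLog σ)).trace.re

/-!
Diagonalize `A = U diag(a) U*` and `B = V diag(b) V*`. Then
`tr (A B) = ∑ i j, a i * b j * w i j` with `w i j = |(U* V) i j|²`, and `w` is doubly stochastic
because `U* V` is unitary. Hölder's inequality on pairs `(i, j)`, applied to
`a i * w i j ^ (1/p)` and `b j * w i j ^ (1/q)`, gives the bound: summing the `p`-th powers of the
first over `j` uses the row sums of `w` and leaves `∑ i, a i ^ p = tr (A ^ p)`, and symmetrically
for the columns and `B`.
-/

open Finset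

lemma Real.mul_rpow_inv_rpow {x w p : ℝ} (hx : 0 ≤ x) (hw : 0 ≤ w) (hp : p ≠ 0) :
    (x * w ^ p⁻¹) ^ p = x ^ p * w := by
  rw [Real.mul_rpow hx (Real.rpow_nonneg hw _), Real.rpow_inv_rpow hw hp]

namespace Matrix

variable {n : Type*} [Fintype n] [DecidableEq n]

theorem sum_mul_mul_le_of_mem_doublyStochastic {p q : ℝ} (hpq : p.HolderConjugate q)
    {a b : n → ℝ} (ha : 0 ≤ a) (hb : 0 ≤ b) {w : Matrix n n ℝ}
    (hw : w ∈ doublyStochastic ℝ n) :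
    ∑ i, ∑ j, a i * b j * w i j ≤ (∑ i, a i ^ p) ^ (1 / p) * (∑ j, b j ^ q) ^ (1 / q) := by
  have hw0 : ∀ i j, 0 ≤ w i j := fun _ _ => nonneg_of_mem_doublyStochastic hw
  set f : n × n → ℝ := fun ij => a ij.1 * w ij.1 ij.2 ^ p⁻¹
  set g : n × n → ℝ := fun ij => b ij.2 * w ij.1 ij.2 ^ q⁻¹
  have hfg : ∀ i j, a i * b j * w i j = f (i, j) * g (i, j) := fun i j => by
    rw [mul_mul_mul_comm, ← Real.rpow_add' (hw0 i j) (by simp [hpq.inv_add_inv_eq_one]),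
      hpq.inv_add_inv_eq_one, Real.rpow_one]
  have hf : ∑ ij, f ij ^ p = ∑ i, a i ^ p := by
    simp_rw [f, Fintype.sum_prod_type, Real.mul_rpow_inv_rpow (ha _) (hw0 _ _) hpq.ne_zero,
      ← mul_sum, sum_row_of_mem_doublyStochastic hw, mul_one]
  have hg : ∑ ij, g ij ^ q = ∑ j, b j ^ q := by
    simp_rw [g, Fintype.sum_prod_type, Real.mul_rpow_inv_rpow (hb _) (hw0 _ _) hpq.symm.ne_zero]
    rw [sum_comm]
    simp_rw [← mul_sum, sum_col_of_mem_doublyStochastic hw, mul_one]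
  calc ∑ i, ∑ j, a i * b j * w i j = ∑ ij, f ij * g ij := by
        simp_rw [hfg, Fintype.sum_prod_type]
    _ ≤ (∑ ij, f ij ^ p) ^ (1 / p) * (∑ ij, g ij ^ q) ^ (1 / q) :=
        Real.inner_le_Lp_mul_Lq_of_nonneg univ hpq
          (fun _ _ => mul_nonneg (ha _) (Real.rpow_nonneg (hw0 _ _) _))
          (fun _ _ => mul_nonneg (hb _) (Real.rpow_nonneg (hw0 _ _) _))
    _ = _ := by rw [hf, hg]

lemma map_normSq_mem_doublyStochastic {W : Matrix n n ℂ} (hW : W ∈ unitaryGroup n ℂ) :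
    W.map Complex.normSq ∈ doublyStochastic ℝ n := by
  have hrow : ∀ i, ∑ j, Complex.normSq (W i j) = 1 := fun i => by
    have h := congr_fun₂ (mem_unitaryGroup_iff.mp hW) i i
    simp only [mul_apply, star_apply, one_apply_eq, Complex.star_def, Complex.mul_conj] at h
    exact_mod_cast h
  have hcol : ∀ j, ∑ i, Complex.normSq (W i j) = 1 := fun j => by
    have h := congr_fun₂ (mem_unitaryGroup_iff'.mp hW) j j
    simp only [mul_apply, star_apply, one_apply_eq, Complex.star_def, mul_comm,
      Complex.mul_conj] at h
    exact_mod_cast h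
  rw [mem_doublyStochastic_iff_sum]
  exact ⟨fun i j => Complex.normSq_nonneg _, hrow, hcol⟩

lemma trace_conjStarAlgAut {R : Type*} [CommRing R] [StarRing R] (u : unitaryGroup n R)
    (M : Matrix n n R) : (Unitary.conjStarAlgAut R _ u M).trace = M.trace := by
  rw [Unitary.conjStarAlgAut_apply, trace_mul_cycle, Unitary.coe_star_mul_self, one_mul]

lemma mul_diagonal_mul_conjTranspose_apply_self {m : Type*} (W : Matrix m n ℂ) (d : n → ℝ)
    (i : m) :
    (W * (diagonal (RCLike.ofReal ∘ d) : Matrix n n ℂ) * Wᴴ) i i =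
      ∑ j, ((d j * Complex.normSq (W i j) : ℝ) : ℂ) := by
  rw [mul_apply]
  refine sum_congr rfl fun j _ => ?_
  rw [mul_diagonal, conjTranspose_apply, Function.comp_apply, mul_right_comm, RCLike.star_def,
    Complex.mul_conj, mul_comm, Complex.ofReal_mul]
  rfl

lemma IsHermitian.re_trace_mul {A B : Matrix n n ℂ} (hA : A.IsHermitian) (hB : B.IsHermitian) :
    (A * B).trace.re = ∑ i, ∑ j, hA.eigenvalues i * hB.eigenvalues j *
      ((star hA.eigenvectorUnitary * hB.eigenvectorUnitary : unitaryGroup n ℂ) : Matrix n n ℂ).map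
        Complex.normSq i j := by
  set U := hA.eigenvectorUnitary
  set V := hB.eigenvectorUnitary
  have hconj : Unitary.conjStarAlgAut ℂ _ (star U) (A * B) =
      diagonal (RCLike.ofReal ∘ hA.eigenvalues) *
        Unitary.conjStarAlgAut ℂ _ (star U * V) (diagonal (RCLike.ofReal ∘ hB.eigenvalues)) := by
    rw [map_mul, hA.conjStarAlgAut_star_eigenvectorUnitary, Unitary.conjStarAlgAut_mul_apply,
      ← hB.spectral_theorem]
  rw [← trace_conjStarAlgAut (star U), hconj, trace, Complex.re_sum]
  refine sum_congr rfl fun i _ => ?_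
  rw [diag_apply, diagonal_mul, Unitary.conjStarAlgAut_apply, star_eq_conjTranspose,
    mul_diagonal_mul_conjTranspose_apply_self]
  simp [mul_sum, mul_assoc]

-- `t ≠ 0` makes `Real.rpow 0 t = 0`, matching the support convention of `matRpow`.
lemma re_trace_matRpow {A : Matrix n n ℂ} (hA : A.IsHermitian) {t : ℝ} (ht : t ≠ 0) :
    (matRpow A t).trace.re = ∑ i, hA.eigenvalues i ^ t := by
  rw [matRpow, dif_pos hA, trace_mul_cycle, Unitary.coe_star_mul_self, one_mul, trace_diagonal,
    Complex.re_sum]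
  refine sum_congr rfl fun i _ => ?_
  split_ifs with h
  · simp [h, Real.zero_rpow ht]
  · simp

end Matrix

theorem holder_trace_inequality_general {n : Type*} [Fintype n] [DecidableEq n]
    (A B : Matrix n n ℂ) (hA : A.PosSemidef) (hB : B.PosSemidef)
    (p q : ℝ) (hp : 1 < p) (hpq : 1 / p + 1 / q = 1) :
    (A * B).trace.re ≤
      ((matRpow A p).trace.re) ^ (1 / p) * ((matRpow B q).trace.re) ^ (1 / q) := by
  have hpq' : p.HolderConjugate q :=
    Real.holderConjugate_iff.mpr ⟨hp, by simpa only [one_div] using hpq⟩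
  rw [hA.isHermitian.re_trace_mul hB.isHermitian, re_trace_matRpow hA.isHermitian hpq'.ne_zero,
    re_trace_matRpow hB.isHermitian hpq'.symm.ne_zero]
  exact sum_mul_mul_le_of_mem_doublyStochastic hpq' hA.eigenvalues_nonneg hB.eigenvalues_nonneg
    (map_normSq_mem_doublyStochastic (SetLike.coe_mem _))

theorem holder_trace_inequality {n : Type*} [Fintype n] [DecidableEq n]
    (A B : Matrix n n ℂ) (hA : A.PosSemidef) (hB : B.PosSemidef)
    (p q : ℝ) (hp : 1 < p) (hq : 1 < q) (hpq : 1 / p + 1 / q = 1) :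
    (A * B).trace.re ≤
      ((matRpow A p).trace.re) ^ (1 / p) * ((matRpow B q).trace.re) ^ (1 / q) :=
  holder_trace_inequality_general A B hA hB p q hp hpq
end

section
/- Let A and B be positive semidefinite complex matrices of the same finite size such that the kernel of B is contained in the kernel of A, and let p, q be real numbers with 0 < p < 1, q < 0 and 1/p + 1/q = 1. Then tr(AB) ≥ (tr(A^p))^(1/p) · (tr(B^q))^(1/q), where B^q is evaluated on the support of B (eigenvalue 0 is mapped to 0). -/
open scoped Kronecker ComplexOrder
open Matrix

/-! Diagonalise `A = U diag(a) U*` and `B = V diag(b) V*`. With the unitary `N = U* V`,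
`tr(AB) = ∑ᵢⱼ |Nᵢⱼ|² aᵢ bⱼ`, the matrix `(|Nᵢⱼ|²)` is doubly stochastic, and `tr A^p = ∑ aᵢ^p`,
`tr B^q = ∑ bⱼ^q`. The claim is thus a reverse Hölder inequality with weights `|Nᵢⱼ|²`, which
follows from the ordinary Hölder inequality for the exponents `1` and `-q` (note
`1⁻¹ + (-q)⁻¹ = p⁻¹`) by writing `f = (f g) g⁻¹`. The kernel condition gives `aᵢ |Nᵢⱼ|² = 0`
whenever `bⱼ = 0`, which is what makes these terms harmless. -/

open Finset

namespace Real

theorem holderTriple_one_neg_of_neg {p q : ℝ} (hq : q < 0) (hpq : 1 / p + 1 / q = 1) :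
    HolderTriple 1 (-q) p where
  inv_add_inv_eq_inv := by rw [one_div, one_div] at hpq; rw [inv_one, inv_neg]; linarith
  left_pos := one_pos
  right_pos := neg_pos.2 hq

theorem Lp_mul_Lq_le_inner_of_nonneg {ι : Type*} (s : Finset ι) {f g : ι → ℝ} {p q : ℝ}
    (hq : q < 0) (hpq : 1 / p + 1 / q = 1) (hf : ∀ i ∈ s, 0 ≤ f i) (hg : ∀ i ∈ s, 0 ≤ g i)
    (hfg : ∀ i ∈ s, g i = 0 → f i = 0) :
    (∑ i ∈ s, f i ^ p) ^ (1 / p) * (∑ i ∈ s, g i ^ q) ^ (1 / q) ≤ ∑ i ∈ s, f i * g i := by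
  have hT := holderTriple_one_neg_of_neg hq hpq
  have hp := hT.pos'
  have hS : 0 ≤ ∑ i ∈ s, f i * g i := sum_nonneg fun i hi => mul_nonneg (hf i hi) (hg i hi)
  have hY : 0 ≤ ∑ i ∈ s, g i ^ q := sum_nonneg fun i hi => rpow_nonneg (hg i hi) q
  have key : ∑ i ∈ s, f i ^ p ≤ (∑ i ∈ s, f i * g i) ^ p * (∑ i ∈ s, g i ^ q) ^ (p / -q) := by
    have := Lr_rpow_le_Lp_mul_Lq_of_nonneg s hT (f := fun i => f i * g i) (g := fun i => (g i)⁻¹)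
      (fun i hi => mul_nonneg (hf i hi) (hg i hi)) (fun i hi => inv_nonneg.2 (hg i hi))
    have hcancel : ∑ i ∈ s, (f i * g i * (g i)⁻¹) ^ p = ∑ i ∈ s, f i ^ p :=
      sum_congr rfl fun i hi => by
        rcases eq_or_ne (g i) 0 with h | h
        · simp [h, hfg i hi h]
        · rw [mul_inv_cancel_right₀ h]
    have hinv : ∑ i ∈ s, (g i)⁻¹ ^ (-q) = ∑ i ∈ s, g i ^ q :=
      sum_congr rfl fun i hi => by rw [inv_rpow (hg i hi), rpow_neg (hg i hi), inv_inv]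
    simpa only [rpow_one, div_one, hcancel, hinv] using this
  rcases hY.eq_or_lt with hY0 | hYpos
  · rw [← hY0, zero_rpow (by simpa using hq.ne), mul_zero]; exact hS
  calc (∑ i ∈ s, f i ^ p) ^ (1 / p) * (∑ i ∈ s, g i ^ q) ^ (1 / q)
      ≤ ((∑ i ∈ s, f i * g i) ^ p * (∑ i ∈ s, g i ^ q) ^ (p / -q)) ^ (1 / p)
          * (∑ i ∈ s, g i ^ q) ^ (1 / q) := by
        gcongr
        exact sum_nonneg fun i hi => rpow_nonneg (hf i hi) p
    _ = ∑ i ∈ s, f i * g i := by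
        rw [mul_rpow (rpow_nonneg hS _) (rpow_nonneg hY _), ← rpow_mul hS, ← rpow_mul hY,
          mul_assoc, ← rpow_add hYpos, mul_one_div_cancel hp.ne', rpow_one,
          show p / -q * (1 / p) + 1 / q = 0 by field_simp; ring, rpow_zero, mul_one]

theorem Lp_mul_Lq_le_weighted_inner_of_nonneg {ι : Type*} (s : Finset ι) {w f g : ι → ℝ}
    {p q : ℝ} (hq : q < 0) (hpq : 1 / p + 1 / q = 1) (hw : ∀ i ∈ s, 0 ≤ w i)
    (hf : ∀ i ∈ s, 0 ≤ f i) (hg : ∀ i ∈ s, 0 ≤ g i) (hfg : ∀ i ∈ s, g i = 0 → w i * f i = 0) :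
    (∑ i ∈ s, w i * f i ^ p) ^ (1 / p) * (∑ i ∈ s, w i * g i ^ q) ^ (1 / q) ≤
      ∑ i ∈ s, w i * f i * g i := by
  have hp := (holderTriple_one_neg_of_neg hq hpq).pos'
  have hw_pow {r : ℝ} (hr : r ≠ 0) {i : ι} (hi : i ∈ s) {x : ℝ} (hx : 0 ≤ x) :
      (w i ^ (1 / r) * x) ^ r = w i * x ^ r := by
    rw [mul_rpow (rpow_nonneg (hw i hi) _) hx, ← rpow_mul (hw i hi), one_div_mul_cancel hr,
      rpow_one]
  have hcross : ∀ i ∈ s, w i ^ (1 / p) * f i * (w i ^ (1 / q) * g i) = w i * f i * g i :=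
    fun i hi => by
      rw [mul_mul_mul_comm, ← rpow_add' (hw i hi) (by rw [hpq]; exact one_ne_zero), hpq, rpow_one,
        mul_assoc]
  have key := Lp_mul_Lq_le_inner_of_nonneg s (f := fun i => w i ^ (1 / p) * f i)
    (g := fun i => w i ^ (1 / q) * g i) hq hpq
    (fun i hi => mul_nonneg (rpow_nonneg (hw i hi) _) (hf i hi))
    (fun i hi => mul_nonneg (rpow_nonneg (hw i hi) _) (hg i hi)) fun i hi hgi => by
      rcases mul_eq_zero.1 hgi with h | h
      · rw [(rpow_eq_zero (hw i hi) (by simpa using hq.ne)).1 h,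
          zero_rpow (by simpa using hp.ne'), zero_mul]
      · rcases mul_eq_zero.1 (hfg i hi h) with h' | h'
        · simp [h', hp.ne']
        · simp [h']
  rwa [sum_congr rfl fun i hi => hw_pow hp.ne' hi (hf i hi),
    sum_congr rfl fun i hi => hw_pow hq.ne hi (hg i hi), sum_congr rfl hcross] at key

end Real

namespace Matrix

variable {n : Type*} [Fintype n] [DecidableEq n]

theorem Lp_mul_Lq_le_sum_mul_of_mem_doublyStochastic {M : Matrix n n ℝ} (hM : M ∈ doublyStochastic ℝ n) {a b : n → ℝ} {p q : ℝ} (hq : q < 0)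
    (hpq : 1 / p + 1 / q = 1) (ha : ∀ i, 0 ≤ a i) (hb : ∀ j, 0 ≤ b j)
    (hab : ∀ i j, b j = 0 → M i j * a i = 0) :
    (∑ i, a i ^ p) ^ (1 / p) * (∑ j, b j ^ q) ^ (1 / q) ≤ ∑ i, ∑ j, M i j * a i * b j := by
  obtain ⟨hM_nonneg, hM_row, hM_col⟩ := mem_doublyStochastic_iff_sum.1 hM
  have hrow : ∑ i, a i ^ p = ∑ i, ∑ j, M i j * a i ^ p := by
    simp only [← sum_mul, hM_row, one_mul]
  have hcol : ∑ j, b j ^ q = ∑ i, ∑ j, M i j * b j ^ q := by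
    rw [sum_comm]; simp only [← sum_mul, hM_col, one_mul]
  have := Real.Lp_mul_Lq_le_weighted_inner_of_nonneg (univ : Finset (n × n))
    (w := fun x => M x.1 x.2) (f := fun x => a x.1) (g := fun x => b x.2) hq hpq
    (fun x _ => hM_nonneg _ _) (fun x _ => ha _) (fun x _ => hb _) (fun x _ => hab x.1 x.2)
  simpa only [Fintype.sum_prod_type, ← hrow, ← hcol] using this


variable {𝕜 : Type*} [RCLike 𝕜]

theorem of_norm_sq_mem_doublyStochastic (U : unitaryGroup n 𝕜) :
    of (fun i j => ‖(U : Matrix n n 𝕜) i j‖ ^ 2) ∈ doublyStochastic ℝ n := by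
  have hdiag {M : Matrix n n 𝕜} (hM : M * star M = 1) (i : n) : ∑ j, ‖M i j‖ ^ 2 = 1 := by
    have := congr_fun (congr_fun hM i) i
    simp only [mul_apply, star_apply, RCLike.star_def, RCLike.mul_conj, one_apply_eq] at this
    exact_mod_cast this
  refine mem_doublyStochastic_iff_sum.2 ⟨fun i j => sq_nonneg _, fun i => ?_, fun j => ?_⟩
  · exact hdiag (Unitary.coe_mul_star_self U) i
  · simpa [star_star] using hdiag (M := star (U : Matrix n n 𝕜)) (by simp) j

theorem trace_conj_diagonal_mul_conj_diagonal (U V : unitaryGroup n 𝕜) (d e : n → 𝕜) :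
    ((U : Matrix n n 𝕜) * diagonal d * star (U : Matrix n n 𝕜) *
        ((V : Matrix n n 𝕜) * diagonal e * star (V : Matrix n n 𝕜))).trace =
      ∑ i, ∑ j, (‖(star (U : Matrix n n 𝕜) * V) i j‖ ^ 2 : 𝕜) * d i * e j := by
  set N := star (U : Matrix n n 𝕜) * V
  have hconj : (U : Matrix n n 𝕜) * diagonal d * star (U : Matrix n n 𝕜) *
        ((V : Matrix n n 𝕜) * diagonal e * star (V : Matrix n n 𝕜)) =
      U * (diagonal d * N * diagonal e * star N) * star (U : Matrix n n 𝕜) := by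
    simp only [N, star_mul, star_star, Matrix.mul_assoc, Unitary.mul_star_self_of_mem U.2,
      Matrix.mul_one]
  rw [hconj, trace_mul_cycle, Unitary.coe_star_mul_self, Matrix.one_mul, trace]
  refine sum_congr rfl fun i _ => ?_
  rw [diag_apply, mul_apply]
  simp only [mul_diagonal, diagonal_mul, star_apply, RCLike.star_def]
  refine sum_congr rfl fun j _ => ?_
  rw [← RCLike.mul_conj]
  ring

namespace IsHermitian

variable {A B : Matrix n n 𝕜}

theorem eq_mul_diagonal_mul_star (hA : A.IsHermitian) :
    A = (hA.eigenvectorUnitary : Matrix n n 𝕜) * diagonal (RCLike.ofReal ∘ hA.eigenvalues) *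
      star (hA.eigenvectorUnitary : Matrix n n 𝕜) :=
  hA.spectral_theorem

theorem star_eigenvectorUnitary_mul (hA : A.IsHermitian) :
    star (hA.eigenvectorUnitary : Matrix n n 𝕜) * A =
      diagonal (RCLike.ofReal ∘ hA.eigenvalues) * star (hA.eigenvectorUnitary : Matrix n n 𝕜) := by
  rw [← hA.conjStarAlgAut_star_eigenvectorUnitary,
    Unitary.conjStarAlgAut_star_apply, Matrix.mul_assoc _ _ (star _),
    Unitary.mul_star_self_of_mem hA.eigenvectorUnitary.2, Matrix.mul_one]

theorem eigenvalues_mul_star_eigenvectorUnitary_mul_eq_zero (hA : A.IsHermitian)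
    (hB : B.IsHermitian) (hker : LinearMap.ker B.mulVecLin ≤ LinearMap.ker A.mulVecLin) {j : n}
    (hj : hB.eigenvalues j = 0) (i : n) :
    (hA.eigenvalues i : 𝕜) *
      (star (hA.eigenvectorUnitary : Matrix n n 𝕜) * hB.eigenvectorUnitary) i j = 0 := by
  have hv : A *ᵥ ⇑(hB.eigenvectorBasis j) = 0 := by
    refine hker ?_
    simp [hB.mulVec_eigenvectorBasis, hj]
  calc (hA.eigenvalues i : 𝕜) *
        (star (hA.eigenvectorUnitary : Matrix n n 𝕜) * hB.eigenvectorUnitary) i j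
      = (star (hA.eigenvectorUnitary : Matrix n n 𝕜) * A * hB.eigenvectorUnitary) i j := by
        rw [hA.star_eigenvectorUnitary_mul, Matrix.mul_assoc, diagonal_mul]; rfl
    _ = (star (hA.eigenvectorUnitary : Matrix n n 𝕜) *ᵥ (A *ᵥ ⇑(hB.eigenvectorBasis j))) i := by
        rw [← eigenvectorUnitary_mulVec, mulVec_mulVec, mulVec_mulVec, mulVec_single_one]; rfl
    _ = 0 := by rw [hv, mulVec_zero]; rfl

end IsHermitian

end Matrix

-- `0 ^ t = 0` for `t ≠ 0` in `Real.rpow`, so the support convention of `matRpow` is automatic.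
theorem trace_matRpow {n : Type*} [Fintype n] [DecidableEq n] {A : Matrix n n ℂ}
    (hA : A.IsHermitian) {t : ℝ} (ht : t ≠ 0) :
    (matRpow A t).trace = ∑ i, ((hA.eigenvalues i ^ t : ℝ) : ℂ) := by
  rw [matRpow, dif_pos hA, trace_mul_cycle, Unitary.star_mul_self_of_mem hA.eigenvectorUnitary.2,
    Matrix.one_mul, trace_diagonal]
  refine sum_congr rfl fun i _ => ?_
  split_ifs with h
  · rw [h, Real.zero_rpow ht]
  · rfl

theorem reverse_holder_trace_inequality_general {n : Type*} [Fintype n] [DecidableEq n]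
    (A B : Matrix n n ℂ) (hA : A.PosSemidef) (hB : B.PosSemidef)
    (hker : LinearMap.ker B.mulVecLin ≤ LinearMap.ker A.mulVecLin)
    (p q : ℝ) (hq : q < 0) (hpq : 1 / p + 1 / q = 1) :
    (A * B).trace.re ≥
      ((matRpow A p).trace.re) ^ (1 / p) * ((matRpow B q).trace.re) ^ (1 / q) := by
  have hAh := hA.isHermitian
  have hBh := hB.isHermitian
  have hp := (Real.holderTriple_one_neg_of_neg hq hpq).pos'
  have htrace := trace_conj_diagonal_mul_conj_diagonal hAh.eigenvectorUnitary
    hBh.eigenvectorUnitary (RCLike.ofReal ∘ hAh.eigenvalues) (RCLike.ofReal ∘ hBh.eigenvalues)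
  rw [← hAh.eq_mul_diagonal_mul_star, ← hBh.eq_mul_diagonal_mul_star] at htrace
  rw [ge_iff_le, htrace, trace_matRpow hAh hp.ne', trace_matRpow hBh hq.ne]
  simp only [Complex.re_sum, Function.comp_apply, Complex.coe_algebraMap, ← Complex.ofReal_pow,
    ← Complex.ofReal_mul, Complex.ofReal_re]
  refine Lp_mul_Lq_le_sum_mul_of_mem_doublyStochastic
    (of_norm_sq_mem_doublyStochastic (star hAh.eigenvectorUnitary * hBh.eigenvectorUnitary)) hq
    hpq hA.eigenvalues_nonneg hB.eigenvalues_nonneg fun i j hj => ?_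
  rcases mul_eq_zero.1 (hAh.eigenvalues_mul_star_eigenvectorUnitary_mul_eq_zero hBh hker hj i)
    with h | h
  · simp only [map_eq_zero] at h
    simp [h]
  · simp [h]

theorem reverse_holder_trace_inequality {n : Type*} [Fintype n] [DecidableEq n]
    (A B : Matrix n n ℂ) (hA : A.PosSemidef) (hB : B.PosSemidef)
    (hker : LinearMap.ker B.mulVecLin ≤ LinearMap.ker A.mulVecLin)
    (p q : ℝ) (hp0 : 0 < p) (hp1 : p < 1) (hq : q < 0) (hpq : 1 / p + 1 / q = 1) :
    (A * B).trace.re ≥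
      ((matRpow A p).trace.re) ^ (1 / p) * ((matRpow B q).trace.re) ^ (1 / q) :=
  reverse_holder_trace_inequality_general A B hA hB hker p q hq hpq
end

section
/- Let ψ be a unit vector in ℂ^(A×B×C) and ρ_ABC = ψψ* the associated pure density matrix, with marginals ρ_AB = tr_C ρ_ABC and ρ_C = tr_{AB} ρ_ABC. Then for every real α, tr_A(ρ_AB^α) = tr_{AC}( (1_{AB} ⊗ ρ_C^{(α−1)/2}) · ρ_ABC · (1_{AB} ⊗ ρ_C^{(α−1)/2}) ), where both sides are matrices on the B-system and all matrix powers of positive semidefinite matrices are taken on the support (0^t = 0). -/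
open scoped Kronecker ComplexOrder
open Matrix

/-
Read ψ as a matrix `M : (A × B) → C`. Then `ρ_AB = M Mᴴ` and `ρ_C = (Mᴴ M)ᵀ`. Polynomials
intertwine, `M q(Mᴴ M) = q(M Mᴴ) M`, and on the finite spectra `x ↦ x^t` (with `0^t = 0`)
agrees with a polynomial, so with `T = (Mᴴ M)^((α-1)/2)` and `x^α = x^((α-1)/2) x^((α-1)/2) x`
for `x ≥ 0` we get `ρ_AB^α = M T T Mᴴ = (M T)(M T)ᴴ`. The right-hand side is the `B`-marginal of
the pure state `(1 ⊗ 1 ⊗ Tᵀ) ψ`, whose matrix is `M T`, and this marginal is `tr_A ((M T)(M T)ᴴ)`.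
-/

open Polynomial

noncomputable def rpowSupp (t x : ℝ) : ℝ := if x = 0 then 0 else x ^ t

lemma rpowSupp_mul_rpowSupp_mul_self {x : ℝ} (hx : 0 ≤ x) (s : ℝ) :
    rpowSupp s x * rpowSupp s x * x = rpowSupp (2 * s + 1) x := by
  rcases hx.eq_or_lt with rfl | hpos
  · simp [rpowSupp]
  · simp only [rpowSupp, if_neg hpos.ne', Real.rpow_add hpos, Real.rpow_one, two_mul]

lemma Polynomial.exists_eval_eq_on_finite {s : Set ℝ} (hs : s.Finite) (f : ℝ → ℝ) :
    ∃ q : ℝ[X], ∀ x ∈ s, q.eval x = f x :=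
  ⟨Lagrange.interpolate hs.toFinset id f, fun _ hx =>
    Lagrange.eval_interpolate_at_node f Function.injective_id.injOn (hs.mem_toFinset.2 hx)⟩

section MatRpow

variable {n : Type*} [Fintype n] [DecidableEq n]

lemma matRpow_eq_cfc {A : Matrix n n ℂ} (hA : A.IsHermitian) (t : ℝ) :
    matRpow A t = cfc (rpowSupp t) A := by
  rw [hA.cfc_eq, matRpow, dif_pos hA]
  rfl

lemma matRpow_isHermitian {A : Matrix n n ℂ} (hA : A.IsHermitian) (t : ℝ) :
    (matRpow A t).IsHermitian := by
  rw [matRpow_eq_cfc hA]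
  exact cfc_predicate _ _

lemma matRpow_eq_aeval {A : Matrix n n ℂ} (hA : A.IsHermitian) {t : ℝ} {q : ℝ[X]}
    (hq : ∀ x ∈ spectrum ℝ A, q.eval x = rpowSupp t x) :
    matRpow A t = aeval A q := by
  rw [matRpow_eq_cfc hA t, ← cfc_polynomial q A hA.isSelfAdjoint]
  exact cfc_congr fun x hx => (hq x hx).symm

lemma transpose_aeval (A : Matrix n n ℂ) (q : ℝ[X]) : (aeval A q)ᵀ = aeval Aᵀ q := by
  induction q using Polynomial.induction_on' with
  | add p r hp hr => rw [map_add, map_add, transpose_add, hp, hr]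
  | monomial k c =>
    simp only [aeval_monomial, Algebra.algebraMap_eq_smul_one, smul_one_mul, transpose_smul,
      transpose_pow]

lemma matRpow_transpose {A : Matrix n n ℂ} (hA : A.IsHermitian) (t : ℝ) :
    matRpow Aᵀ t = (matRpow A t)ᵀ := by
  obtain ⟨q, hq⟩ := Polynomial.exists_eval_eq_on_finite
    (A.finite_real_spectrum.union Aᵀ.finite_real_spectrum) (rpowSupp t)
  rw [matRpow_eq_aeval hA.transpose fun x hx => hq x (.inr hx),
    matRpow_eq_aeval hA fun x hx => hq x (.inl hx), transpose_aeval]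

lemma Matrix.PosSemidef.nonneg_of_mem_spectrum {A : Matrix n n ℂ} (hA : A.PosSemidef) {x : ℝ}
    (hx : x ∈ spectrum ℝ A) : 0 ≤ x := by
  rw [hA.isHermitian.spectrum_real_eq_range_eigenvalues] at hx
  obtain ⟨i, rfl⟩ := hx
  exact hA.eigenvalues_nonneg i

end MatRpow

lemma mul_aeval_eq_aeval_mul {R S m n : Type*} [CommSemiring R] [Semiring S] [Algebra R S]
    [Fintype m] [Fintype n] [DecidableEq m] [DecidableEq n] {M : Matrix m n S}
    {X : Matrix n n S} {Y : Matrix m m S} (h : M * X = Y * M) (q : R[X]) :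
    M * aeval X q = aeval Y q * M := by
  have hpow : ∀ k : ℕ, M * X ^ k = Y ^ k * M := fun k => by
    induction k with
    | zero => simp
    | succ k ih => rw [pow_succ, pow_succ, ← Matrix.mul_assoc, ih, Matrix.mul_assoc, h,
        Matrix.mul_assoc]
  induction q using Polynomial.induction_on' with
  | add p r hp hr => rw [map_add, map_add, Matrix.mul_add, Matrix.add_mul, hp, hr]
  | monomial k c =>
    simp only [aeval_monomial, Algebra.algebraMap_eq_smul_one, smul_one_mul, Matrix.mul_smul,
      Matrix.smul_mul, hpow]

lemma matRpow_mul_conjTranspose_self {m n : Type*} [Fintype m] [Fintype n] [DecidableEq m]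
    [DecidableEq n] (M : Matrix m n ℂ) (α : ℝ) :
    matRpow (M * Mᴴ) α =
      M * matRpow (Mᴴ * M) ((α - 1) / 2) * matRpow (Mᴴ * M) ((α - 1) / 2) * Mᴴ := by
  set s := (α - 1) / 2
  have hR := posSemidef_self_mul_conjTranspose M
  obtain ⟨q, hq⟩ := Polynomial.exists_eval_eq_on_finite
    ((Mᴴ * M).finite_real_spectrum.union (M * Mᴴ).finite_real_spectrum) (rpowSupp s)
  have hs : matRpow (Mᴴ * M) s = aeval (Mᴴ * M) q :=
    matRpow_eq_aeval (isHermitian_conjTranspose_mul_self M) fun x hx => hq x (.inl hx)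
  have hα : matRpow (M * Mᴴ) α = aeval (M * Mᴴ) (q * q * X) := by
    refine matRpow_eq_aeval hR.isHermitian fun x hx => ?_
    rw [eval_mul, eval_mul, eval_X, hq x (.inr hx),
      rpowSupp_mul_rpowSupp_mul_self (hR.nonneg_of_mem_spectrum hx), show 2 * s + 1 = α by ring]
  have hint : ∀ r : ℝ[X], M * aeval (Mᴴ * M) r = aeval (M * Mᴴ) r * M :=
    mul_aeval_eq_aeval_mul (Matrix.mul_assoc _ _ _).symm
  rw [hα, hs, map_mul, map_mul, aeval_X, hint, Matrix.mul_assoc (aeval (M * Mᴴ) q) M, hint]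
  simp only [Matrix.mul_assoc]

lemma mul_vecMulVec_star_mul_conjTranspose {m n : Type*} [Fintype n] (P : Matrix m n ℂ)
    (ψ : n → ℂ) : P * vecMulVec ψ (star ψ) * Pᴴ = vecMulVec (P *ᵥ ψ) (star (P *ᵥ ψ)) := by
  rw [mul_vecMulVec, vecMulVec_mul, star_mulVec]

section Tripartite

variable {A B C : Type*}

def curryThird (ψ : A × B × C → ℂ) : Matrix (A × B) C ℂ :=
  of fun p k => ψ (p.1, p.2, k)

lemma trThird_vecMulVec_star [Fintype C] (ψ : A × B × C → ℂ) :
    trThird (vecMulVec ψ (star ψ)) = curryThird ψ * (curryThird ψ)ᴴ := by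
  ext p p'
  simp [trThird, curryThird, mul_apply, vecMulVec_apply]

lemma trFstSnd_vecMulVec_star [Fintype A] [Fintype B] (ψ : A × B × C → ℂ) :
    trFstSnd (vecMulVec ψ (star ψ)) = ((curryThird ψ)ᴴ * curryThird ψ)ᵀ := by
  ext k k'
  simp only [trFstSnd, curryThird, of_apply, transpose_apply, mul_apply, conjTranspose_apply,
    vecMulVec_apply, Pi.star_apply, Fintype.sum_prod_type, mul_comm]

lemma trFstThird_vecMulVec_star [Fintype A] [Fintype C] (ψ : A × B × C → ℂ) :
    trFstThird (vecMulVec ψ (star ψ)) = trFst (curryThird ψ * (curryThird ψ)ᴴ) := by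
  ext j j'
  simp [trFstThird, trFst, curryThird, mul_apply, vecMulVec_apply]

lemma curryThird_one_kronecker_mulVec [Fintype A] [DecidableEq A] [Fintype B] [DecidableEq B]
    [Fintype C] (X : Matrix C C ℂ) (ψ : A × B × C → ℂ) :
    curryThird (((1 : Matrix A A ℂ) ⊗ₖ ((1 : Matrix B B ℂ) ⊗ₖ X)) *ᵥ ψ) =
      curryThird ψ * Xᵀ := by
  ext p k
  simp [curryThird, mulVec, dotProduct, mul_apply, one_apply, Fintype.sum_prod_type, mul_comm]

end Tripartite

theorem marginals_unitarily_equivalent_general {A B C : Type*}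
    [Fintype A] [DecidableEq A] [Fintype B] [DecidableEq B] [Fintype C] [DecidableEq C]
    (ψ : A × B × C → ℂ) (α : ℝ) :
    trFst (matRpow (trThird (vecMulVec ψ (star ψ))) α) =
      trFstThird
        (((1 : Matrix A A ℂ) ⊗ₖ ((1 : Matrix B B ℂ) ⊗ₖ
            matRpow (trFstSnd (vecMulVec ψ (star ψ))) ((α - 1) / 2))) *
          vecMulVec ψ (star ψ) *
          ((1 : Matrix A A ℂ) ⊗ₖ ((1 : Matrix B B ℂ) ⊗ₖ
            matRpow (trFstSnd (vecMulVec ψ (star ψ))) ((α - 1) / 2)))) := by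
  set M := curryThird ψ
  set T := matRpow (Mᴴ * M) ((α - 1) / 2)
  have hT : T.IsHermitian := matRpow_isHermitian (isHermitian_conjTranspose_mul_self M) _
  have hσ : matRpow (trFstSnd (vecMulVec ψ (star ψ))) ((α - 1) / 2) = Tᵀ := by
    rw [trFstSnd_vecMulVec_star, matRpow_transpose (isHermitian_conjTranspose_mul_self M)]
  set P : Matrix (A × B × C) (A × B × C) ℂ := 1 ⊗ₖ (1 ⊗ₖ Tᵀ)
  have hP : Pᴴ = P := by
    simp only [P, conjTranspose_kronecker, conjTranspose_one, hT.transpose.eq]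
  have hsandwich := mul_vecMulVec_star_mul_conjTranspose P ψ
  rw [hP] at hsandwich
  rw [hσ, hsandwich, trFstThird_vecMulVec_star, curryThird_one_kronecker_mulVec,
    transpose_transpose, trThird_vecMulVec_star, matRpow_mul_conjTranspose_self,
    conjTranspose_mul, hT.eq]
  simp only [Matrix.mul_assoc, M, T]

theorem marginals_unitarily_equivalent {A B C : Type*}
    [Fintype A] [DecidableEq A] [Fintype B] [DecidableEq B] [Fintype C] [DecidableEq C]
    (ψ : A × B × C → ℂ) (hψ : star ψ ⬝ᵥ ψ = 1) (α : ℝ) :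
    trFst (matRpow (trThird (vecMulVec ψ (star ψ))) α) =
      trFstThird
        (((1 : Matrix A A ℂ) ⊗ₖ ((1 : Matrix B B ℂ) ⊗ₖ
            matRpow (trFstSnd (vecMulVec ψ (star ψ))) ((α - 1) / 2))) *
          vecMulVec ψ (star ψ) *
          ((1 : Matrix A A ℂ) ⊗ₖ ((1 : Matrix B B ℂ) ⊗ₖ
            matRpow (trFstSnd (vecMulVec ψ (star ψ))) ((α - 1) / 2)))) :=
  marginals_unitarily_equivalent_general ψ α
end
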